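/- arXiv:1112.5860 — 2 statements merged into one kernel-verified Lean document; each statement's English description precedes it below -/
import Mathlib

section
/- Given three hyperplanes in projective d-space: α tangent to a nondegenerate quadric Q1 and β tangent to a nondegenerate quadric Q2, with α ≠ β, and assuming the tangency quadratic form on the pencil spanned by α and β is nondegenerate for both Q1 and Q2, there exist unique hyperplanes α' ≠ α tangent to Q1 and β' ≠ β tangent to Q2 within the pencil spanned by α and β. -/
/-!
Restricted to the pencil `t • a + b`, the tangency form `(Q⁻¹ u, u)` of a quadric is a quadratic
polynomial in `t` whose leading coefficient `(Q⁻¹ a, a)` vanishes because `a` is tangent. Its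
linear coefficient `2 (Q⁻¹ a, b)` is nonzero because the form is nondegenerate on the pencil
(its discriminant is then `(Q⁻¹ a, b)²`), so it has exactly one root.
-/

open Matrix

section

variable {K n : Type*} [Field K] [Fintype n]

theorem existsUnique_mul_add_eq_zero {c : K} (hc : c ≠ 0) (e : K) : ∃! t : K, c * t + e = 0 :=
  ⟨-e / c, by field_simp; ring, fun t ht => by field_simp; linear_combination ht⟩

theorem Matrix.IsSymm.mulVec_dotProduct_comm {A : Matrix n n K} (hA : A.IsSymm) (x y : n → K) :
    A *ᵥ x ⬝ᵥ y = A *ᵥ y ⬝ᵥ x := by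
  rw [dotProduct_comm, dotProduct_mulVec, ← mulVec_transpose, hA.eq, dotProduct_comm]

theorem Matrix.IsSymm.mulVec_smul_add_dotProduct {A : Matrix n n K} (hA : A.IsSymm)
    (t : K) (a b : n → K) :
    A *ᵥ (t • a + b) ⬝ᵥ (t • a + b) =
      t ^ 2 * (A *ᵥ a ⬝ᵥ a) + 2 * (A *ᵥ a ⬝ᵥ b) * t + A *ᵥ b ⬝ᵥ b := by
  simp only [mulVec_add, mulVec_smul, add_dotProduct, dotProduct_add, smul_dotProduct,
    dotProduct_smul, smul_eq_mul, hA.mulVec_dotProduct_comm b a]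
  ring

theorem Matrix.IsSymm.existsUnique_smul_add_isotropic {A : Matrix n n K} (hA : A.IsSymm)
    (h2 : (2 : K) ≠ 0) {a b : n → K} (ha : A *ᵥ a ⬝ᵥ a = 0) (hab : A *ᵥ a ⬝ᵥ b ≠ 0) :
    ∃! t : K, A *ᵥ (t • a + b) ⬝ᵥ (t • a + b) = 0 := by
  simp only [hA.mulVec_smul_add_dotProduct, ha, mul_zero, zero_add]
  exact existsUnique_mul_add_eq_zero (mul_ne_zero h2 hab) _

end

theorem stmt_5_general {K : Type*} [Field K] (hchar : (2 : K) ≠ 0) (d : ℕ)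
    (Q1 Q2 : Matrix (Fin (d + 1)) (Fin (d + 1)) K)
    (h1 : Q1.IsSymm) (h2 : Q2.IsSymm)
    (a b : Fin (d + 1) → K)
    (hta : Q1⁻¹.mulVec a ⬝ᵥ a = 0) (htb : Q2⁻¹.mulVec b ⬝ᵥ b = 0)
    (hnd1 : (Q1⁻¹.mulVec a ⬝ᵥ b) ^ 2 - (Q1⁻¹.mulVec a ⬝ᵥ a) * (Q1⁻¹.mulVec b ⬝ᵥ b) ≠ 0)
    (hnd2 : (Q2⁻¹.mulVec a ⬝ᵥ b) ^ 2 - (Q2⁻¹.mulVec a ⬝ᵥ a) * (Q2⁻¹.mulVec b ⬝ᵥ b) ≠ 0) :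
    (∃! t : K, Q1⁻¹.mulVec (t • a + b) ⬝ᵥ (t • a + b) = 0) ∧
    (∃! s : K, Q2⁻¹.mulVec (a + s • b) ⬝ᵥ (a + s • b) = 0) := by
  have hab1 : Q1⁻¹ *ᵥ a ⬝ᵥ b ≠ 0 := fun h => hnd1 (by rw [h, hta]; ring)
  have hba2 : Q2⁻¹ *ᵥ b ⬝ᵥ a ≠ 0 := by
    rw [h2.inv.mulVec_dotProduct_comm]
    exact fun h => hnd2 (by rw [h, htb]; ring)
  refine ⟨h1.inv.existsUnique_smul_add_isotropic hchar hta hab1, ?_⟩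
  simpa only [add_comm a] using h2.inv.existsUnique_smul_add_isotropic hchar htb hba2

/-- Given hyperplanes `a` tangent to `Q1` and `b` tangent to `Q2`, with the tangency
quadratic on the pencil `λa+μb` nondegenerate for both quadrics, there is a unique
hyperplane `a' ≠ a` in the pencil tangent to `Q1` (parametrized as `t•a + b`), and a
unique `b' ≠ b` tangent to `Q2` (parametrized as `a + s•b`). -/
theorem stmt_5 {K : Type*} [Field K] [IsAlgClosed K] (hchar : (2 : K) ≠ 0) (d : ℕ)
    (Q1 Q2 : Matrix (Fin (d + 1)) (Fin (d + 1)) K)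
    (h1 : Q1.IsSymm) (h2 : Q2.IsSymm) (hd1 : IsUnit Q1.det) (hd2 : IsUnit Q2.det)
    (a b : Fin (d + 1) → K) (hab : LinearIndependent K ![a, b])
    (hta : Q1⁻¹.mulVec a ⬝ᵥ a = 0) (htb : Q2⁻¹.mulVec b ⬝ᵥ b = 0)
    (hnd1 : (Q1⁻¹.mulVec a ⬝ᵥ b) ^ 2 - (Q1⁻¹.mulVec a ⬝ᵥ a) * (Q1⁻¹.mulVec b ⬝ᵥ b) ≠ 0)
    (hnd2 : (Q2⁻¹.mulVec a ⬝ᵥ b) ^ 2 - (Q2⁻¹.mulVec a ⬝ᵥ a) * (Q2⁻¹.mulVec b ⬝ᵥ b) ≠ 0) :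
    (∃! t : K, Q1⁻¹.mulVec (t • a + b) ⬝ᵥ (t • a + b) = 0) ∧
    (∃! s : K, Q2⁻¹.mulVec (a + s • b) ⬝ᵥ (a + s • b) = 0) :=
  stmt_5_general hchar d Q1 Q2 h1 h2 a b hta htb hnd1 hnd2
end

section
/- Chasles' theorem in the plane for the dual pencil: a generic line ℓ in CP² is tangent to exactly d−1 = 1 quadric of a confocal family; more generally in CP^d, the tangency condition of a fixed generic line ℓ to the confocal family Q_λ is a polynomial equation of degree d−1 in λ, hence a generic line is tangent to exactly d−1 quadrics of the family counted with multiplicity. -/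
/-!
At `λ = aₖ` only the `k`-th term of each cleared sum survives, and the discriminant becomes
`(2pₖvₖπₖ)² - 4 (vₖ²πₖ)(pₖ²πₖ) = 0`, where `πₖ = ∏_{j ≠ k} (aⱼ - aₖ)`; as the `aₖ` are distinct,
`∏ⱼ (aⱼ - λ)` divides the discriminant. The discriminant has degree `2d - 1`: the term
`4 A (Q - π)` has degree `(d - 1) + d`, since the leading coefficient of `A` is `±∑ vᵢ² ≠ 0`,
while `B²` has degree at most `2d - 2`. So the quotient has degree `d - 1`, and over `ℂ` it has
`d - 1` roots counted with multiplicity.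
-/

open Polynomial Finset

section LinearFactors

variable {K : Type*} [Field K]

theorem natDegree_C_sub_X (c : K) : (C c - X).natDegree = 1 := by
  rw [← neg_sub, natDegree_neg, natDegree_X_sub_C]

theorem leadingCoeff_C_sub_X (c : K) : (C c - X).leadingCoeff = -1 := by
  rw [← neg_sub, leadingCoeff_neg, leadingCoeff_X_sub_C]

theorem C_sub_X_ne_zero (c : K) : C c - X ≠ 0 :=
  ne_zero_of_natDegree_gt (n := 0) (by rw [natDegree_C_sub_X]; exact one_pos)

variable {ι : Type*} (a : ι → K) (s : Finset ι)

theorem natDegree_prod_C_sub_X : (∏ j ∈ s, (C (a j) - X)).natDegree = #s := by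
  simp [natDegree_prod _ _ fun j _ => C_sub_X_ne_zero (a j), natDegree_C_sub_X]

theorem leadingCoeff_prod_C_sub_X : (∏ j ∈ s, (C (a j) - X)).leadingCoeff = (-1) ^ #s := by
  simp [leadingCoeff_prod, leadingCoeff_C_sub_X]

theorem prod_C_sub_X_ne_zero : ∏ j ∈ s, (C (a j) - X) ≠ 0 :=
  prod_ne_zero_iff.2 fun j _ => C_sub_X_ne_zero (a j)

theorem prod_C_sub_X_dvd_of_isRoot [Fintype ι] {q : K[X]} (ha : Function.Injective a)
    (hq : ∀ k, q.IsRoot (a k)) : ∏ j, (C (a j) - X) ∣ q := by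
  refine prod_dvd_of_coprime (fun i _ j _ hij => ?_) fun k _ => ?_
  · simpa only [Function.onFun, ← neg_sub X] using (pairwise_coprime_X_sub_C ha hij).neg_neg
  · rw [← neg_sub, neg_dvd, dvd_iff_isRoot]
    exact hq k

end LinearFactors

theorem card_pos_of_sum_ne_zero {ι M : Type*} [Fintype ι] [AddCommMonoid M] {f : ι → M}
    (h : ∑ i, f i ≠ 0) : 0 < Fintype.card ι :=
  Fintype.card_pos_iff.2 (univ_nonempty_iff.1 (nonempty_of_sum_ne_zero h))

section Confocal

variable {K ι : Type*} [Field K] [Fintype ι] [DecidableEq ι]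

/-- Clearing denominators in `∑ᵢ cᵢ / (aᵢ - X)` by the factor `∏ⱼ (aⱼ - X)`. -/
noncomputable def partialFractionNumerator (a c : ι → K) : K[X] :=
  ∑ i, C (c i) * ∏ j ∈ univ.erase i, (C (a j) - X)

/-- Substituting `p + t • v` into `∑ᵢ xᵢ² / (aᵢ - λ) = 1` and clearing denominators gives
`A t² + B t + (Q - π) = 0`; this is its discriminant `B² - 4 A (Q - π)` as a polynomial in `λ`. -/
noncomputable def tangencyDiscriminant (a p v : ι → K) : K[X] :=
  partialFractionNumerator a (fun i => 2 * p i * v i) ^ 2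
    - 4 * partialFractionNumerator a (fun i => v i ^ 2)
      * (partialFractionNumerator a (fun i => p i ^ 2) - ∏ j, (C (a j) - X))

variable (a : ι → K)

theorem natDegree_prod_erase_C_sub_X (i : ι) :
    (∏ j ∈ univ.erase i, (C (a j) - X)).natDegree = Fintype.card ι - 1 := by
  rw [natDegree_prod_C_sub_X, card_erase_of_mem (mem_univ i), card_univ]

theorem natDegree_partialFractionNumerator_le (c : ι → K) :
    (partialFractionNumerator a c).natDegree ≤ Fintype.card ι - 1 :=
  natDegree_sum_le_of_forall_le _ _ fun i _ =>
    (natDegree_C_mul_le _ _).trans (natDegree_prod_erase_C_sub_X a i).le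

theorem coeff_partialFractionNumerator (c : ι → K) :
    (partialFractionNumerator a c).coeff (Fintype.card ι - 1) =
      (-1) ^ (Fintype.card ι - 1) * ∑ i, c i := by
  rw [partialFractionNumerator, finsetSum_coeff, mul_sum]
  refine sum_congr rfl fun i _ => ?_
  rw [coeff_C_mul, ← natDegree_prod_erase_C_sub_X a i, coeff_natDegree,
    leadingCoeff_prod_C_sub_X, natDegree_prod_C_sub_X, mul_comm]

theorem eval_partialFractionNumerator (c : ι → K) (k : ι) :
    (partialFractionNumerator a c).eval (a k) =
      c k * (∏ j ∈ univ.erase k, (C (a j) - X)).eval (a k) := by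
  rw [partialFractionNumerator, eval_finsetSum, sum_eq_single k, eval_mul, eval_C]
  · intro i _ hik
    rw [eval_mul, eval_prod, prod_eq_zero (mem_erase.2 ⟨Ne.symm hik, mem_univ k⟩), mul_zero]
    simp
  · simp

theorem isRoot_tangencyDiscriminant (p v : ι → K) (k : ι) :
    (tangencyDiscriminant a p v).IsRoot (a k) := by
  have hπ : (∏ j, (C (a j) - X)).eval (a k) = 0 := by
    rw [eval_prod, prod_eq_zero (mem_univ k)]
    simp
  simp only [IsRoot, tangencyDiscriminant, eval_sub, eval_mul, eval_pow, eval_ofNat,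
    eval_partialFractionNumerator, hπ]
  ring

theorem natDegree_tangencyDiscriminant [NeZero (2 : K)] (p : ι → K) {v : ι → K}
    (hv : ∑ i, v i ^ 2 ≠ 0) :
    (tangencyDiscriminant a p v).natDegree = 2 * Fintype.card ι - 1 := by
  set n := Fintype.card ι
  set A := partialFractionNumerator a fun i => v i ^ 2
  set Qπ := partialFractionNumerator a (fun i => p i ^ 2) - ∏ j, (C (a j) - X)
  have hn : 0 < n := card_pos_of_sum_ne_zero hv
  have hA_coeff : A.coeff (n - 1) ≠ 0 := by
    rw [coeff_partialFractionNumerator]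
    exact mul_ne_zero (pow_ne_zero _ (neg_ne_zero.2 one_ne_zero)) hv
  have hA : A.natDegree = n - 1 :=
    (natDegree_partialFractionNumerator_le a _).antisymm (le_natDegree_of_ne_zero hA_coeff)
  have hQπ : Qπ.natDegree = n := by
    have hπ : (∏ j, (C (a j) - X)).natDegree = n := by rw [natDegree_prod_C_sub_X, card_univ]
    rw [natDegree_sub_eq_right_of_natDegree_lt, hπ]
    exact hπ ▸ (natDegree_partialFractionNumerator_le a _).trans_lt (Nat.sub_lt hn one_pos)
  have h4 : (4 : K) ≠ 0 := by
    simpa [show (4 : K) = 2 * 2 by norm_num] using mul_ne_zero (two_ne_zero (α := K)) two_ne_zero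
  have h4AQπ : (4 * A * Qπ).natDegree = 2 * n - 1 := by
    rw [← map_ofNat C 4, mul_assoc, natDegree_C_mul h4,
      natDegree_mul (fun h => hA_coeff (by simp [h])) (ne_zero_of_natDegree_gt (hQπ ▸ hn)), hA, hQπ]
    omega
  have hB : (partialFractionNumerator a (fun i => 2 * p i * v i) ^ 2).natDegree < 2 * n - 1 := by
    have := natDegree_partialFractionNumerator_le a fun i => 2 * p i * v i
    exact (natDegree_pow_le).trans_lt (by omega)
  rw [tangencyDiscriminant, natDegree_sub_eq_right_of_natDegree_lt (h4AQπ ▸ hB), h4AQπ]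

theorem exists_tangencyDiscriminant_eq_prod_mul [NeZero (2 : K)] {a : ι → K}
    (ha : Function.Injective a) (p : ι → K) {v : ι → K} (hv : ∑ i, v i ^ 2 ≠ 0) :
    ∃ P : K[X], tangencyDiscriminant a p v = (∏ j, (C (a j) - X)) * P ∧
      P.natDegree = Fintype.card ι - 1 := by
  obtain ⟨P, hP⟩ := prod_C_sub_X_dvd_of_isRoot a ha (isRoot_tangencyDiscriminant a p v)
  have hdeg := natDegree_tangencyDiscriminant a p hv
  have hn := card_pos_of_sum_ne_zero hv
  have hP0 : P ≠ 0 := by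
    rintro rfl
    rw [mul_zero] at hP
    rw [hP, natDegree_zero] at hdeg
    omega
  rw [hP, natDegree_mul (prod_C_sub_X_ne_zero a _) hP0, natDegree_prod_C_sub_X, card_univ] at hdeg
  exact ⟨P, hP, by omega⟩

end Confocal

open Polynomial in
theorem stmt_11_general (d : ℕ) (a p v : Fin d → ℂ)
    (ha : Function.Injective a) (hv : (∑ i, (v i) ^ 2) ≠ 0) :
    ∃ P : Polynomial ℂ,
      ((∑ i, C (2 * p i * v i) *
          ∏ j ∈ Finset.univ.erase i, (C (a j) - X)) ^ 2
        - 4 * (∑ i, C ((v i) ^ 2) * ∏ j ∈ Finset.univ.erase i, (C (a j) - X))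
            * ((∑ i, C ((p i) ^ 2) * ∏ j ∈ Finset.univ.erase i, (C (a j) - X))
                - ∏ j, (C (a j) - X)))
        = (∏ j, (C (a j) - X)) * P
      ∧ P.natDegree = d - 1 ∧ Multiset.card P.roots = d - 1 := by
  obtain ⟨P, hP, hdeg⟩ := exists_tangencyDiscriminant_eq_prod_mul ha p hv
  rw [Fintype.card_fin] at hdeg
  exact ⟨P, hP, hdeg, IsAlgClosed.card_roots_eq_natDegree.trans hdeg⟩

open Polynomial in
/-- Chasles' theorem: for a generic line `t ↦ p + t•v` in `CP^d`, the discriminant of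
the intersection with the confocal quadric `Q_λ : ∑ xᵢ²/(aᵢ−λ) = 1` (after clearing
denominators) is divisible by `∏(aᵢ−λ)`, and the quotient is a polynomial in `λ` of
degree exactly `d−1`; hence a generic line is tangent to exactly `d−1` quadrics of the
family, counted with multiplicity. -/
theorem stmt_11 (d : ℕ) (hd : 1 ≤ d) (a p v : Fin d → ℂ)
    (ha : Function.Injective a) (hv : (∑ i, (v i) ^ 2) ≠ 0) :
    ∃ P : Polynomial ℂ,
      ((∑ i, C (2 * p i * v i) *
          ∏ j ∈ Finset.univ.erase i, (C (a j) - X)) ^ 2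
        - 4 * (∑ i, C ((v i) ^ 2) * ∏ j ∈ Finset.univ.erase i, (C (a j) - X))
            * ((∑ i, C ((p i) ^ 2) * ∏ j ∈ Finset.univ.erase i, (C (a j) - X))
                - ∏ j, (C (a j) - X)))
        = (∏ j, (C (a j) - X)) * P
      ∧ P.natDegree = d - 1 ∧ Multiset.card P.roots = d - 1 :=
  stmt_11_general d a p v ha hv
end
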